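/- An R-module is Gorenstein weak injective if and only if it is GWI-copure injective and has finite Gorenstein weak injective dimension. -/

import Mathlib

open CategoryTheory

universe u

noncomputable section

variable (R : Type u) [Ring R]

/-- Vanishing of `Ext^n_R(N, M)` for left `R`-modules, expressed via the `Ext` bifunctor
on the `ℤ`-linear abelian category `ModuleCat R`. -/
def ExtVanish (n : ℕ) (N M : ModuleCat.{u} R) : Prop :=
  Subsingleton (((_root_.Ext ℤ (ModuleCat.{u} R) n).obj (Opposite.op N)).obj M)

/-- An `R`-module is super finitely presented if it admits a resolution by
finitely generated projective modules. -/
def SuperFinitelyPresented (N : ModuleCat.{u} R) : Prop :=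
  ∃ (F : ℕ → ModuleCat.{u} R) (d : ∀ n, F (n + 1) →ₗ[R] F n) (ε : F 0 →ₗ[R] N),
    (∀ n, Module.Finite R (F n)) ∧ (∀ n, Module.Projective R (F n)) ∧
    Function.Surjective ε ∧ Function.Exact (d 0) ε ∧
    (∀ n, Function.Exact (d (n + 1)) (d n))

/-- An `R`-module `W` is weak injective if `Ext^1_R(N, W) = 0` for every super finitely
presented module `N`. -/
def WeakInjective (W : ModuleCat.{u} R) : Prop :=
  ∀ N : ModuleCat.{u} R, SuperFinitelyPresented R N → ExtVanish R 1 N W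

/-- `wid_R M ≤ n` : `Ext^{n+1}_R(N, M) = 0` for every super finitely presented `N`. -/
def WidLE (M : ModuleCat.{u} R) (n : ℕ) : Prop :=
  ∀ N : ModuleCat.{u} R, SuperFinitelyPresented R N → ExtVanish R (n + 1) N M

/-- The weak injective dimension, as an element of `ℕ∞`. -/
def Wid (M : ModuleCat.{u} R) : ℕ∞ :=
  sInf {c : ℕ∞ | ∃ n : ℕ, c = n ∧ WidLE R M n}

/-- A doubly infinite exact complex of injective modules which stays exact after applying
`Hom_R(W, -)` for every module `W` in the test class `𝒯`. -/
def IsTotallyAcyclicInjComplex (𝒯 : ModuleCat.{u} R → Prop)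
    (I : ℤ → ModuleCat.{u} R) (d : ∀ n : ℤ, I n →ₗ[R] I (n + 1)) : Prop :=
  (∀ n, Module.Injective R (I n)) ∧
  (∀ n, Function.Exact (d n) (d (n + 1))) ∧
  (∀ W : ModuleCat.{u} R, 𝒯 W → ∀ n,
    Function.Exact (fun g : W →ₗ[R] I n => (d n).comp g)
      (fun g : W →ₗ[R] I (n + 1) => (d (n + 1)).comp g))

/-- `M` is Gorenstein injective relative to the test class `𝒯` : `M` is the cokernel
`Coker (I_1 → I_0)` of a `Hom(𝒯, -)`-exact exact complex of injective modules. -/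
def GorensteinRelInjective (𝒯 : ModuleCat.{u} R → Prop) (M : ModuleCat.{u} R) : Prop :=
  ∃ (I : ℤ → ModuleCat.{u} R) (d : ∀ n : ℤ, I n →ₗ[R] I (n + 1)) (π : I 0 →ₗ[R] M),
    IsTotallyAcyclicInjComplex R 𝒯 I d ∧
    Function.Surjective π ∧ Function.Exact (d (-1)) π

/-- Gorenstein weak injective modules: the test class is that of weak injective modules. -/
def GorensteinWeakInjective (M : ModuleCat.{u} R) : Prop :=
  GorensteinRelInjective R (WeakInjective R) M

/-- Gorenstein injective modules: the test class is that of injective modules. -/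
def GorensteinInjective (M : ModuleCat.{u} R) : Prop :=
  GorensteinRelInjective R (fun E => Module.Injective R E) M

/-- The data of an exact sequence `0 → M → G^0 → ⋯ → G^n → 0` (the modules `G^i` for
`i > n` being trivial). -/
def IsFiniteCoresolution (M : ModuleCat.{u} R) (n : ℕ) (G : ℕ → ModuleCat.{u} R)
    (d : ∀ i, G i →ₗ[R] G (i + 1)) (ε : M →ₗ[R] G 0) : Prop :=
  Function.Injective ε ∧ Function.Exact ε (d 0) ∧
  (∀ i, Function.Exact (d i) (d (i + 1))) ∧
  (∀ i, n < i → ∀ x : G i, x = 0)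

/-- `Gwid_R M ≤ n` : `M` has a coresolution of length `n` by Gorenstein weak injective
modules. -/
def GwidLE (M : ModuleCat.{u} R) (n : ℕ) : Prop :=
  ∃ (G : ℕ → ModuleCat.{u} R) (d : ∀ i, G i →ₗ[R] G (i + 1)) (ε : M →ₗ[R] G 0),
    IsFiniteCoresolution R M n G d ε ∧ ∀ i, GorensteinWeakInjective R (G i)

/-- The Gorenstein weak injective dimension, as an element of `ℕ∞`. -/
def Gwid (M : ModuleCat.{u} R) : ℕ∞ :=
  sInf {c : ℕ∞ | ∃ n : ℕ, c = n ∧ GwidLE R M n}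

/-- `Gid_R M ≤ n`, via coresolutions by Gorenstein injective modules. -/
def GidLE (M : ModuleCat.{u} R) (n : ℕ) : Prop :=
  ∃ (G : ℕ → ModuleCat.{u} R) (d : ∀ i, G i →ₗ[R] G (i + 1)) (ε : M →ₗ[R] G 0),
    IsFiniteCoresolution R M n G d ε ∧ ∀ i, GorensteinInjective R (G i)

/-- The Gorenstein injective dimension, as an element of `ℕ∞`. -/
def Gid (M : ModuleCat.{u} R) : ℕ∞ :=
  sInf {c : ℕ∞ | ∃ n : ℕ, c = n ∧ GidLE R M n}

/-- `id_R M ≤ n`, via coresolutions by injective modules. -/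
def IdLE (M : ModuleCat.{u} R) (n : ℕ) : Prop :=
  ∃ (G : ℕ → ModuleCat.{u} R) (d : ∀ i, G i →ₗ[R] G (i + 1)) (ε : M →ₗ[R] G 0),
    IsFiniteCoresolution R M n G d ε ∧ ∀ i, Module.Injective R (G i)

/-- The injective dimension, as an element of `ℕ∞`. -/
def Idim (M : ModuleCat.{u} R) : ℕ∞ :=
  sInf {c : ℕ∞ | ∃ n : ℕ, c = n ∧ IdLE R M n}

/-- The data of an exact sequence `0 → P_n → ⋯ → P_0 → M → 0`. -/
def IsFiniteResolution (M : ModuleCat.{u} R) (n : ℕ) (P : ℕ → ModuleCat.{u} R)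
    (d : ∀ i, P (i + 1) →ₗ[R] P i) (ε : P 0 →ₗ[R] M) : Prop :=
  Function.Surjective ε ∧ Function.Exact (d 0) ε ∧
  (∀ i, Function.Exact (d (i + 1)) (d i)) ∧
  (∀ i, n < i → ∀ x : P i, x = 0)

/-- `pd_R M ≤ n`, via resolutions by projective modules. -/
def PdLE (M : ModuleCat.{u} R) (n : ℕ) : Prop :=
  ∃ (P : ℕ → ModuleCat.{u} R) (d : ∀ i, P (i + 1) →ₗ[R] P i) (ε : P 0 →ₗ[R] M),
    IsFiniteResolution R M n P d ε ∧ ∀ i, Module.Projective R (P i)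

end

variable (R : Type u) [Ring R]

/-- A short exact sequence `0 → L → M → N → 0` of `R`-modules. -/
def ShortExactSeq (L M N : ModuleCat.{u} R) (f : L →ₗ[R] M) (g : M →ₗ[R] N) : Prop :=
  Function.Injective f ∧ Function.Surjective g ∧ Function.Exact f g

/-- Exactness of `0 → Hom(C, X) → Hom(B, X) → Hom(A, X) → 0` induced by
`0 → A → B → C → 0`. -/
def HomContraExact (X : ModuleCat.{u} R) {A B C : ModuleCat.{u} R}
    (f : A →ₗ[R] B) (g : B →ₗ[R] C) : Prop :=
  Function.Injective (fun h : C →ₗ[R] X => h.comp g) ∧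
  Function.Exact (fun h : C →ₗ[R] X => h.comp g) (fun h : B →ₗ[R] X => h.comp f) ∧
  Function.Surjective (fun h : B →ₗ[R] X => h.comp f)

/-- A short exact sequence is `GWI`-copure exact if `Hom_R(-, X)` leaves it exact for
every Gorenstein weak injective module `X`. -/
def GWICopureExact {A B C : ModuleCat.{u} R} (f : A →ₗ[R] B) (g : B →ₗ[R] C) : Prop :=
  ShortExactSeq R A B C f g ∧
  ∀ X : ModuleCat.{u} R, GorensteinWeakInjective R X → HomContraExact R X f g

/-- `M` is `GWI`-copure injective if `Hom_R(-, M)` is exact on every `GWI`-copure exact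
sequence. -/
def GWICopureInjectiveMod (M : ModuleCat.{u} R) : Prop :=
  ∀ (A B C : ModuleCat.{u} R) (f : A →ₗ[R] B) (g : B →ₗ[R] C),
    GWICopureExact R f g → HomContraExact R M f g

/-- `φ : M → G` is a Gorenstein weak injective preenvelope of `M`. -/
def GWIPreenvelope (M G : ModuleCat.{u} R) (φ : M →ₗ[R] G) : Prop :=
  GorensteinWeakInjective R G ∧
  ∀ G' : ModuleCat.{u} R, GorensteinWeakInjective R G' →
    ∀ f : M →ₗ[R] G', ∃ g : G →ₗ[R] G', g.comp φ = f

/-- A `WI`-pure Tate injective resolution of `M` : an injective resolution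
`0 → M → E^0 → E^1 → ⋯`, a `WI`-pure exact complex `T` of injectives, and a chain map
`u : E → T` which is an isomorphism in all sufficiently large degrees. -/
def WIPureTateInjectiveResolution (M : ModuleCat.{u} R)
    (E : ℕ → ModuleCat.{u} R) (dE : ∀ n, E n →ₗ[R] E (n + 1)) (ε : M →ₗ[R] E 0)
    (T : ℤ → ModuleCat.{u} R) (dT : ∀ n : ℤ, T n →ₗ[R] T (n + 1))
    (u : ∀ n : ℕ, E n →ₗ[R] T n) : Prop :=
  (∀ n, Module.Injective R (E n)) ∧ Function.Injective ε ∧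
  Function.Exact ε (dE 0) ∧ (∀ n, Function.Exact (dE n) (dE (n + 1))) ∧
  IsTotallyAcyclicInjComplex R (WeakInjective R) T dT ∧
  (∀ n : ℕ, (dT n).comp (u n) = (u (n + 1)).comp (dE n)) ∧
  ∃ N : ℕ, ∀ n, N ≤ n → Function.Bijective (u n)

/-- Vanishing of the relative Tate cohomology `Êxt^i_GWI(N, M)` for all `i ∈ ℤ`,
computed from the `WI`-pure exact complex `T` : the complex `Hom_R(N, T)` is exact. -/
def ExtHatVanishesAll (N : ModuleCat.{u} R) (T : ℤ → ModuleCat.{u} R)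
    (dT : ∀ n : ℤ, T n →ₗ[R] T (n + 1)) : Prop :=
  ∀ n : ℤ, Function.Exact (fun g : N →ₗ[R] T n => (dT n).comp g)
    (fun g : N →ₗ[R] T (n + 1) => (dT (n + 1)).comp g)

/-!
From a coresolution of length `k` by Gorenstein weak injective modules one builds, by induction
on `k`, a short exact sequence `0 → M → Q → P → 0` in which `Q` is an iterated extension of
Gorenstein weak injective modules and `Hom_R(P, -)` is exact on every `Hom(WI, -)`-exact exact
complex of injectives. The latter makes the sequence `GWI`-copure exact, so a `GWI`-copure
injective `M` splits off `Q`, and `Q ≅ M ⊕ P`. The class of iterated extensions of Gorenstein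
weak injective modules, `M` and `P` has `Ext¹(WI, -) = 0` and, by the horseshoe lemmas, every
member of it is both the kernel and the cokernel of a short exact sequence with injective middle
term and other end in the class. Splicing these sequences gives a complete resolution of `M`.
-/

theorem Function.exact_of_subsingleton {A B C : Type*} [Zero C] [Nonempty A] [Subsingleton B]
    [Subsingleton C] (f : A → B) (g : B → C) : Function.Exact f g :=
  fun _ => ⟨fun _ => ⟨Classical.arbitrary A, Subsingleton.elim _ _⟩,
    fun _ => Subsingleton.elim _ _⟩

section LinearAlgebra

variable {R} {A B C X : Type*} [AddCommGroup A] [Module R A] [AddCommGroup B] [Module R B]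
  [AddCommGroup C] [Module R C] [AddCommGroup X] [Module R X]

open LinearMap

theorem LinearMap.exists_comp_eq_of_surjective {p : A →ₗ[R] B} (hp : Function.Surjective p)
    (f : A →ₗ[R] C) (h : ker p ≤ ker f) : ∃ g : B →ₗ[R] C, g ∘ₗ p = f :=
  ⟨(ker p).liftQ f h ∘ₗ (p.quotKerEquivOfSurjective hp).symm.toLinearMap, by
    ext a
    simp [quotKerEquivOfSurjective_symm_apply]⟩

theorem LinearMap.exists_comp_eq_of_injective {i : A →ₗ[R] B} (hi : Function.Injective i)
    (f : X →ₗ[R] B) (h : range f ≤ range i) : ∃ g : X →ₗ[R] A, i ∘ₗ g = f :=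
  ⟨(LinearEquiv.ofInjective i hi).symm.toLinearMap ∘ₗ f.codRestrict _ fun x => h ⟨x, rfl⟩, by
    ext x
    simp⟩

theorem Module.Injective.exists_comp_eq {E B C : Type u} [AddCommGroup E] [Module R E]
    [AddCommGroup B] [Module R B] [AddCommGroup C] [Module R C] (hE : Module.Injective R E)
    (d : B →ₗ[R] C) (x : B →ₗ[R] E) (h : ker d ≤ ker x) : ∃ y : C →ₗ[R] E, y ∘ₗ d = x := by
  obtain ⟨g, hg⟩ := exists_comp_eq_of_surjective d.surjective_rangeRestrict x
    (by rwa [ker_rangeRestrict])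
  obtain ⟨y, hy⟩ := hE.out (range d).subtype (Submodule.subtype_injective _) g
  exact ⟨y, by ext b; simp [← hg, ← hy]⟩

theorem LinearMap.mem_ker_coprod_neg_iff {p : A →ₗ[R] C} {φ : B →ₗ[R] C} {x : A × B} :
    x ∈ ker (p.coprod (-φ)) ↔ p x.1 = φ x.2 := by
  simp [sub_eq_zero, ← sub_eq_add_neg]

end LinearAlgebra

section InjectiveModules

variable {R}

theorem Module.injective_of_subsingleton (E : Type u) [AddCommGroup E] [Module R E]
    [Subsingleton E] : Module.Injective R E :=
  ⟨fun _ _ _ _ _ _ _ _ _ => ⟨0, fun _ => Subsingleton.elim _ _⟩⟩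

theorem Module.injective_prod {E F : Type u} [AddCommGroup E] [Module R E] [AddCommGroup F]
    [Module R F] (hE : Module.Injective R E) (hF : Module.Injective R F) :
    Module.Injective R (E × F) :=
  ⟨fun _ _ _ _ _ _ f hf g => by
    obtain ⟨h₁, hh₁⟩ := hE.out f hf (LinearMap.fst R E F ∘ₗ g)
    obtain ⟨h₂, hh₂⟩ := hF.out f hf (LinearMap.snd R E F ∘ₗ g)
    exact ⟨h₁.prod h₂, fun x => Prod.ext (hh₁ x) (hh₂ x)⟩⟩

theorem extVanish_succ_of_injective (N E : ModuleCat.{u} R) (hE : Module.Injective R E)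
    (n : ℕ) : ExtVanish R (n + 1) N E := by
  let P := ProjectiveResolution.of N
  have hexact : (P.complex.linearYonedaObj ℤ E).ExactAt (n + 1) := by
    rw [HomologicalComplex.exactAt_iff' _ n (n + 1) (n + 2) (by simp) (by simp),
      ShortComplex.moduleCat_exact_iff]
    intro (x : P.complex.X (n + 1) ⟶ E) (hx : P.complex.d (n + 2) (n + 1) ≫ x = 0)
    have hP := P.exact_succ n
    rw [ShortComplex.moduleCat_exact_iff] at hP
    obtain ⟨y, hy⟩ := hE.exists_comp_eq (P.complex.d (n + 1) n).hom x.hom fun z hz => by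
      obtain ⟨w, rfl⟩ := hP z hz
      exact LinearMap.congr_fun (congrArg ModuleCat.Hom.hom hx) w
    exact ⟨ModuleCat.ofHom y, ModuleCat.hom_ext hy⟩
  rw [HomologicalComplex.exactAt_iff_isZero_homology] at hexact
  exact ModuleCat.subsingleton_of_isZero (hexact.of_iso (P.isoExt (n + 1) E))

theorem weakInjective_of_injective (E : ModuleCat.{u} R) (hE : Module.Injective R E) :
    WeakInjective R E :=
  fun N _ => extVanish_succ_of_injective N E hE 0

end InjectiveModules

section Pullback

variable {R}

open LinearMap

abbrev pullbackModule {Y Z W : ModuleCat.{u} R} (p : Y →ₗ[R] Z) (φ : W →ₗ[R] Z) :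
    ModuleCat.{u} R :=
  ModuleCat.of R (ker (p.coprod (-φ)))

theorem shortExactSeq_pullback_snd {K Y Z W : ModuleCat.{u} R} {i : K →ₗ[R] Y}
    {p : Y →ₗ[R] Z} (h : ShortExactSeq R K Y Z i p) (φ : W →ₗ[R] Z) :
    ShortExactSeq R K (pullbackModule p φ) W
      ((i.prod 0).codRestrict _ fun k =>
        mem_ker_coprod_neg_iff.2 (by simp [h.2.2.apply_apply_eq_zero]))
      (snd R Y W ∘ₗ (ker _).subtype) := by
  obtain ⟨hi, hp, hip⟩ := h
  refine ⟨fun k k' hk => hi congr(($hk).1.1), fun w => ?_, fun x => ⟨fun hx => ?_, ?_⟩⟩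
  · obtain ⟨y, hy⟩ := hp (φ w)
    exact ⟨⟨(y, w), mem_ker_coprod_neg_iff.2 hy⟩, rfl⟩
  · replace hx : x.1.2 = 0 := hx
    obtain ⟨k, hk⟩ := (hip x.1.1).1 (by simpa [hx] using mem_ker_coprod_neg_iff.1 x.2)
    exact ⟨k, Subtype.ext (Prod.ext hk hx.symm)⟩
  · rintro ⟨k, rfl⟩
    rfl

theorem shortExactSeq_pullback_fst {K Y Z W : ModuleCat.{u} R} {i : K →ₗ[R] W}
    {φ : W →ₗ[R] Z} (h : ShortExactSeq R K W Z i φ) (p : Y →ₗ[R] Z) :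
    ShortExactSeq R K (pullbackModule p φ) Y
      (((0 : K →ₗ[R] Y).prod i).codRestrict _ fun k =>
        mem_ker_coprod_neg_iff.2 (by simp [h.2.2.apply_apply_eq_zero]))
      (fst R Y W ∘ₗ (ker _).subtype) := by
  obtain ⟨hi, hφ, hiφ⟩ := h
  refine ⟨fun k k' hk => hi congr(($hk).1.2), fun y => ?_, fun x => ⟨fun hx => ?_, ?_⟩⟩
  · obtain ⟨w, hw⟩ := hφ (p y)
    exact ⟨⟨(y, w), mem_ker_coprod_neg_iff.2 hw.symm⟩, rfl⟩
  · replace hx : x.1.1 = 0 := hx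
    obtain ⟨k, hk⟩ := (hiφ x.1.2).1 (by simpa [hx] using (mem_ker_coprod_neg_iff.1 x.2).symm)
    exact ⟨k, Subtype.ext (Prod.ext hx.symm hk)⟩
  · rintro ⟨k, rfl⟩
    rfl

end Pullback

/-- `Ext¹(W, K) = 0`, in the form: every extension of `W` by `K` splits. -/
def ExtensionsSplit (W K : ModuleCat.{u} R) : Prop :=
  ∀ (Y : ModuleCat.{u} R) (i : K →ₗ[R] Y) (p : Y →ₗ[R] W),
    ShortExactSeq R K Y W i p → ∃ r : Y →ₗ[R] K, r ∘ₗ i = LinearMap.id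

section ExtensionsSplit

variable {R}

open LinearMap

theorem ShortExactSeq.exists_section_iff {A B C : ModuleCat.{u} R} {f : A →ₗ[R] B}
    {g : B →ₗ[R] C} (h : ShortExactSeq R A B C f g) :
    (∃ s : C →ₗ[R] B, g ∘ₗ s = LinearMap.id) ↔ ∃ r : B →ₗ[R] A, r ∘ₗ f = LinearMap.id :=
  (h.2.2.split_tfae h.1 h.2.1).out 0 1

theorem ShortExactSeq.exists_complement {M Q P : ModuleCat.{u} R} {ι : M →ₗ[R] Q}
    {q : Q →ₗ[R] P} (h : ShortExactSeq R M Q P ι q) {r : Q →ₗ[R] M}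
    (hr : r ∘ₗ ι = LinearMap.id) :
    ∃ s : P →ₗ[R] Q, ShortExactSeq R P Q M s r ∧ q ∘ₗ s = LinearMap.id := by
  obtain ⟨s₀, hs₀⟩ := h.exists_section_iff.2 ⟨r, hr⟩
  have hr' m : r (ι m) = m := LinearMap.congr_fun hr m
  have hqs y : q (s₀ y) = y := LinearMap.congr_fun hs₀ y
  have hqι m : q (ι m) = 0 := h.2.2.apply_apply_eq_zero m
  refine ⟨s₀ - ι ∘ₗ r ∘ₗ s₀, ⟨fun y y' hy => ?_, fun m => ⟨ι m, hr' m⟩, fun x => ?_⟩,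
    LinearMap.ext fun y => by simp [hqs, hqι]⟩
  · simpa [hqs, hqι] using congrArg q hy
  · refine ⟨fun hx => ⟨q x, ?_⟩, ?_⟩
    · obtain ⟨m, hm⟩ := (h.2.2 (x - s₀ (q x))).1 (by simp [hqs])
      have hm' : m = -r (s₀ (q x)) := by simpa [hr', hx] using congrArg r hm
      rw [LinearMap.sub_apply, LinearMap.comp_apply, LinearMap.comp_apply,
        neg_eq_iff_eq_neg.1 hm'.symm, map_neg, sub_neg_eq_add, hm, add_sub_cancel]
    · rintro ⟨y, rfl⟩
      simp [hr']

theorem ExtensionsSplit.exists_lift {W K Y Z : ModuleCat.{u} R} (hK : ExtensionsSplit R W K)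
    {i : K →ₗ[R] Y} {p : Y →ₗ[R] Z} (h : ShortExactSeq R K Y Z i p) (φ : W →ₗ[R] Z) :
    ∃ ψ : W →ₗ[R] Y, p ∘ₗ ψ = φ := by
  have hpb := shortExactSeq_pullback_snd h φ
  obtain ⟨s, hs⟩ := hpb.exists_section_iff.2 (hK _ _ _ hpb)
  refine ⟨fst R Y W ∘ₗ (ker _).subtype ∘ₗ s, LinearMap.ext fun w => ?_⟩
  have hw : (s w).1.2 = w := LinearMap.congr_fun hs w
  simpa [hw] using mem_ker_coprod_neg_iff.1 (s w).2

theorem shortExactSeq_quotient {A X B Y W : ModuleCat.{u} R} {iA : A →ₗ[R] X}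
    {pA : X →ₗ[R] B} (hA : ShortExactSeq R A X B iA pA) {i : X →ₗ[R] Y} {p : Y →ₗ[R] W}
    (hX : ShortExactSeq R X Y W i p) :
    ∃ (β : B →ₗ[R] ModuleCat.of R (Y ⧸ range (i ∘ₗ iA)))
      (p' : ModuleCat.of R (Y ⧸ range (i ∘ₗ iA)) →ₗ[R] W),
      ShortExactSeq R B _ W β p' ∧ p' ∘ₗ (range (i ∘ₗ iA)).mkQ = p := by
  obtain ⟨hiA, hpA, hAB⟩ := hA
  obtain ⟨hi, hp, hip⟩ := hX
  set N := range (i ∘ₗ iA)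
  obtain ⟨β, hβ⟩ := exists_comp_eq_of_surjective hpA (N.mkQ ∘ₗ i) <| by
    rw [hAB.linearMap_ker_eq]
    rintro _ ⟨a, rfl⟩
    simp [N]
  obtain ⟨p', hp'⟩ := exists_comp_eq_of_surjective N.mkQ_surjective p <| by
    rw [Submodule.ker_mkQ]
    rintro _ ⟨a, rfl⟩
    simp [hip.apply_apply_eq_zero]
  have hβ' x := LinearMap.congr_fun hβ x
  have hp'' y := LinearMap.congr_fun hp' y
  simp only [coe_comp, Function.comp_apply, Submodule.mkQ_apply] at hβ' hp''
  refine ⟨β, p', ⟨fun b b' hbb' => ?_, fun w => ?_, fun z => ?_⟩, hp'⟩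
  · obtain ⟨x, rfl⟩ := hpA b
    obtain ⟨x', rfl⟩ := hpA b'
    rw [hβ', hβ', Submodule.Quotient.eq, ← map_sub] at hbb'
    obtain ⟨a, ha⟩ := hbb'
    rw [← sub_eq_zero, ← map_sub, ← hi ha, hAB.apply_apply_eq_zero]
  · obtain ⟨y, rfl⟩ := hp w
    exact ⟨N.mkQ y, hp'' y⟩
  · obtain ⟨y, rfl⟩ := N.mkQ_surjective z
    rw [Submodule.mkQ_apply, hp'']
    constructor
    · intro hy
      obtain ⟨x, rfl⟩ := (hip y).1 hy
      exact ⟨pA x, hβ' x⟩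
    · rintro ⟨b, hb⟩
      obtain ⟨x, rfl⟩ := hpA b
      rw [hβ', Submodule.Quotient.eq] at hb
      obtain ⟨a, ha⟩ := hb
      simpa [hip.apply_apply_eq_zero] using congrArg p ha

theorem ExtensionsSplit.of_shortExactSeq {W A X B : ModuleCat.{u} R} {iA : A →ₗ[R] X}
    {pA : X →ₗ[R] B} (hAXB : ShortExactSeq R A X B iA pA) (hA : ExtensionsSplit R W A)
    (hB : ExtensionsSplit R W B) : ExtensionsSplit R W X := by
  intro Y i p hX
  obtain ⟨β, p', hB', hp'⟩ := shortExactSeq_quotient hAXB hX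
  obtain ⟨s', hs'⟩ := hB.exists_lift hB' LinearMap.id
  obtain ⟨s, hs⟩ := hA.exists_lift
    ⟨hX.1.comp hAXB.1, Submodule.mkQ_surjective _, exact_map_mkQ_range _⟩ s'
  exact hX.exists_section_iff.1 ⟨s, by rw [← hp', comp_assoc, hs, hs']⟩

theorem ExtensionsSplit.of_retract {W X G : ModuleCat.{u} R} {σ : X →ₗ[R] G} {ρ : G →ₗ[R] X}
    (hρσ : ρ ∘ₗ σ = LinearMap.id) (hG : ExtensionsSplit R W G) : ExtensionsSplit R W X := by
  intro Y i p ⟨hi, hp, hip⟩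
  -- `(Y × G) ⧸ D` is the pushout of `i` and `σ`
  set D := range (i.prod (-σ))
  have hD (x : X) : D.mkQ (i x, 0) = D.mkQ (0, σ x) := by
    rw [Submodule.mkQ_apply, Submodule.mkQ_apply, Submodule.Quotient.eq]
    exact ⟨x, by simp⟩
  obtain ⟨p', hp'⟩ := exists_comp_eq_of_surjective D.mkQ_surjective (p ∘ₗ fst R Y G) <| by
    rw [Submodule.ker_mkQ]
    rintro _ ⟨x, rfl⟩
    simp [hip.apply_apply_eq_zero]
  have hp'' y := LinearMap.congr_fun hp' y
  simp only [coe_comp, Function.comp_apply, Submodule.mkQ_apply, fst_apply] at hp''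
  have hses : ShortExactSeq R G (ModuleCat.of R ((Y × G) ⧸ D)) W (D.mkQ ∘ₗ inr R Y G) p' := by
    refine ⟨fun g g' hg => ?_, fun w => ?_, fun z => ?_⟩
    · obtain ⟨x, hx⟩ := (Submodule.Quotient.eq _).1 hg
      have hx0 : x = 0 := hi (by simpa using congrArg Prod.fst hx)
      exact sub_eq_zero.1 (by simpa [hx0] using (congrArg Prod.snd hx).symm)
    · obtain ⟨y, rfl⟩ := hp w
      exact ⟨D.mkQ (y, 0), hp'' _⟩
    · obtain ⟨⟨y, g⟩, rfl⟩ := D.mkQ_surjective z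
      rw [Submodule.mkQ_apply, hp'']
      constructor
      · intro hy
        obtain ⟨x, rfl⟩ := (hip y).1 hy
        refine ⟨g + σ x, (Submodule.Quotient.eq _).2 ⟨-x, ?_⟩⟩
        simp
      · rintro ⟨g', hg'⟩
        obtain ⟨x, hx⟩ := (Submodule.Quotient.eq _).1 hg'
        simpa [hip.apply_apply_eq_zero] using (congrArg (p ∘ Prod.fst) hx).symm
  obtain ⟨r, hr⟩ := hG _ _ _ hses
  refine ⟨ρ ∘ₗ r ∘ₗ D.mkQ ∘ₗ inl R Y G, LinearMap.ext fun x => ?_⟩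
  change ρ (r (D.mkQ (i x, 0))) = x
  rw [hD]
  exact (congrArg ρ (LinearMap.congr_fun hr (σ x))).trans (LinearMap.congr_fun hρσ x)

end ExtensionsSplit

def HomExactOnTotallyAcyclic (L : ModuleCat.{u} R) : Prop :=
  ∀ (I : ℤ → ModuleCat.{u} R) (d : ∀ n : ℤ, I n →ₗ[R] I (n + 1)),
    IsTotallyAcyclicInjComplex R (WeakInjective R) I d → ∀ n : ℤ,
    Function.Exact (fun g : L →ₗ[R] I n => (d n).comp g)
      (fun g : L →ₗ[R] I (n + 1) => (d (n + 1)).comp g)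

section HomExactOnTotallyAcyclic

variable {R}

open LinearMap

theorem exact_postcomp_of_exists {I : ℤ → ModuleCat.{u} R}
    {d : ∀ n : ℤ, I n →ₗ[R] I (n + 1)} (hd : ∀ n, Function.Exact (d n) (d (n + 1)))
    {L : ModuleCat.{u} R} {n : ℤ}
    (h : ∀ g : L →ₗ[R] I (n + 1), d (n + 1) ∘ₗ g = 0 → ∃ f, d n ∘ₗ f = g) :
    Function.Exact (fun g : L →ₗ[R] I n => (d n).comp g)
      (fun g : L →ₗ[R] I (n + 1) => (d (n + 1)).comp g) := fun g =>
  ⟨h g, by rintro ⟨f, rfl⟩; simp [← comp_assoc, (hd n).linearMap_comp_eq_zero]⟩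

theorem HomExactOnTotallyAcyclic.of_weakInjective {W : ModuleCat.{u} R}
    (hW : WeakInjective R W) : HomExactOnTotallyAcyclic R W :=
  fun _ _ hT n => hT.2.2 W hW n

theorem HomExactOnTotallyAcyclic.of_injective {E : ModuleCat.{u} R}
    (hE : Module.Injective R E) : HomExactOnTotallyAcyclic R E :=
  .of_weakInjective (weakInjective_of_injective E hE)

theorem IsTotallyAcyclicInjComplex.exists_extend {I : ℤ → ModuleCat.{u} R}
    {d : ∀ n : ℤ, I n →ₗ[R] I (n + 1)} (hT : IsTotallyAcyclicInjComplex R (WeakInjective R) I d)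
    {A B Q : ModuleCat.{u} R} {ι : A →ₗ[R] B} {q : B →ₗ[R] Q} (h : ShortExactSeq R A B Q ι q)
    (hQ : HomExactOnTotallyAcyclic R Q) {n : ℤ} (φ : A →ₗ[R] I n) (hφ : d n ∘ₗ φ = 0) :
    ∃ ψ : B →ₗ[R] I n, d n ∘ₗ ψ = 0 ∧ ψ ∘ₗ ι = φ := by
  obtain ⟨hι, hq, hιq⟩ := h
  obtain ⟨ψ₁, hψ₁⟩ := (hT.1 n).exists_comp_eq ι φ (by simp [ker_eq_bot.2 hι])
  obtain ⟨α, hα⟩ := exists_comp_eq_of_surjective hq (d n ∘ₗ ψ₁) <| by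
    rw [hιq.linearMap_ker_eq]
    rintro _ ⟨a, rfl⟩
    simpa [← hψ₁] using LinearMap.congr_fun hφ a
  obtain ⟨β, hβ⟩ := ((hQ I d hT n) α).1 <| by
    refine (LinearMap.cancel_right hq).1 ?_
    rw [comp_assoc, hα, ← comp_assoc, (hT.2.1 n).linearMap_comp_eq_zero, zero_comp, zero_comp]
  refine ⟨ψ₁ - β ∘ₗ q, ?_, ?_⟩
  · rw [comp_sub, ← comp_assoc, show d n ∘ₗ β = α from hβ, hα, sub_self]
  · rw [sub_comp, comp_assoc, hιq.linearMap_comp_eq_zero, comp_zero, sub_zero, hψ₁]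

theorem HomExactOnTotallyAcyclic.of_shortExactSeq {L E L' : ModuleCat.{u} R} {i : L →ₗ[R] E}
    {p : E →ₗ[R] L'} (h : ShortExactSeq R L E L' i p) (hE : Module.Injective R E)
    (hL' : HomExactOnTotallyAcyclic R L') : HomExactOnTotallyAcyclic R L := by
  intro I d hT n
  refine exact_postcomp_of_exists hT.2.1 fun g hg => ?_
  obtain ⟨ψ, hψ, hψi⟩ := hT.exists_extend h hL' g hg
  obtain ⟨f, hf⟩ := ((HomExactOnTotallyAcyclic.of_injective hE I d hT n) ψ).1 hψ
  exact ⟨f ∘ₗ i, by rw [← LinearMap.comp_assoc, show d n ∘ₗ f = ψ from hf, hψi]⟩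

end HomExactOnTotallyAcyclic

structure InjectiveShortExactSeq (A B : ModuleCat.{u} R) where
  E : ModuleCat.{u} R
  i : A →ₗ[R] E
  p : E →ₗ[R] B
  injective : Module.Injective R E
  shortExactSeq : ShortExactSeq R A E B i p

def IsSpliceableIn (𝒳 : ModuleCat.{u} R → Prop) (X : ModuleCat.{u} R) : Prop :=
  (∀ W : ModuleCat.{u} R, WeakInjective R W → ExtensionsSplit R W X) ∧
  (∃ (B : ModuleCat.{u} R) (_ : InjectiveShortExactSeq R X B), 𝒳 B) ∧
  (∃ (A : ModuleCat.{u} R) (_ : InjectiveShortExactSeq R A X), 𝒳 A)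

section Splicing

variable {R}

open LinearMap

theorem IsSpliceableIn.mono {𝒳 𝒳' : ModuleCat.{u} R → Prop} (h : ∀ X, 𝒳 X → 𝒳' X)
    {X : ModuleCat.{u} R} (hX : IsSpliceableIn R 𝒳 X) : IsSpliceableIn R 𝒳' X :=
  let ⟨hs, ⟨B, D, hB⟩, ⟨A, D', hA⟩⟩ := hX
  ⟨hs, ⟨B, D, h B hB⟩, ⟨A, D', h A hA⟩⟩

theorem gorensteinWeakInjective_of_splice (Z : ℤ → ModuleCat.{u} R)
    (S : ∀ n, InjectiveShortExactSeq R (Z n) (Z (n + 1)))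
    (hZ : ∀ n W, WeakInjective R W → ExtensionsSplit R W (Z n)) :
    GorensteinWeakInjective R (Z 1) := by
  have hexact n : Function.Exact ((S (n + 1)).i ∘ₗ (S n).p)
      ((S (n + 1 + 1)).i ∘ₗ (S (n + 1)).p) :=
    (S n).shortExactSeq.2.1.comp_exact_iff_exact.2
      ((S (n + 1 + 1)).shortExactSeq.1.comp_exact_iff_exact.2 (S (n + 1)).shortExactSeq.2.2)
  refine ⟨fun n => (S n).E, fun n => (S (n + 1)).i ∘ₗ (S n).p, (S 0).p,
    ⟨fun n => (S n).injective, hexact, fun W hW n => ?_⟩, (S 0).shortExactSeq.2.1,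
    (S (-1)).shortExactSeq.2.1.comp_exact_iff_exact.2 (S 0).shortExactSeq.2.2⟩
  refine exact_postcomp_of_exists hexact fun g hg => ?_
  obtain ⟨g₁, rfl⟩ := exists_comp_eq_of_injective (S (n + 1)).shortExactSeq.1 g <| by
    rw [← (S (n + 1)).shortExactSeq.2.2.linearMap_ker_eq]
    rintro _ ⟨w, rfl⟩
    exact (S (n + 1 + 1)).shortExactSeq.1 (by simpa using LinearMap.congr_fun hg w)
  obtain ⟨h, rfl⟩ := (hZ n W hW).exists_lift (S n).shortExactSeq g₁
  exact ⟨h, rfl⟩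

theorem gorensteinWeakInjective_of_isSpliceableIn {𝒳 : ModuleCat.{u} R → Prop}
    (h𝒳 : ∀ X, 𝒳 X → IsSpliceableIn R 𝒳 X) {M : ModuleCat.{u} R} (hM : 𝒳 M) :
    GorensteinWeakInjective R M := by
  choose next step hnext using fun X : {X // 𝒳 X} => (h𝒳 X.1 X.2).2.1
  choose prev step' hprev using fun X : {X // 𝒳 X} => (h𝒳 X.1 X.2).2.2
  let r : ℕ → {X // 𝒳 X} := fun k => Nat.rec ⟨M, hM⟩ (fun _ X => ⟨next X, hnext X⟩) k
  let l : ℕ → {X // 𝒳 X} := fun k => Nat.rec ⟨M, hM⟩ (fun _ X => ⟨prev X, hprev X⟩) k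
  -- `Z (k + 1) = r k` runs through the chosen cokernels and `Z (-k) = l (k + 1)` through the
  -- chosen kernels, so that `Z 1 = M`.
  let Z : ℤ → {X // 𝒳 X}
    | Int.ofNat 0 => l 1
    | Int.ofNat (k + 1) => r k
    | Int.negSucc k => l (k + 2)
  let S : ∀ n, InjectiveShortExactSeq R (Z n).1 (Z (n + 1)).1
    | Int.ofNat 0 => step' (l 0)
    | Int.ofNat (k + 1) => step (r k)
    | Int.negSucc 0 => step' (l 1)
    | Int.negSucc (k + 1) => step' (l (k + 2))
  exact gorensteinWeakInjective_of_splice (fun n => (Z n).1) S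
    fun n => (h𝒳 _ (Z n).2).1

end Splicing

/-- `X ≅ ker (d n)` for some `n`. Leaving the degree free makes this class visibly closed under
cosyzygies and syzygies, which for `GorensteinWeakInjective` would need a reindexing of `I`. -/
def IsTotallyAcyclicCycle (X : ModuleCat.{u} R) : Prop :=
  ∃ (I : ℤ → ModuleCat.{u} R) (d : ∀ n : ℤ, I n →ₗ[R] I (n + 1)) (n : ℤ) (j : X →ₗ[R] I n),
    IsTotallyAcyclicInjComplex R (WeakInjective R) I d ∧ Function.Injective j ∧
      Function.Exact j (d n)

section Cycles

variable {R}

open LinearMap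

theorem GorensteinWeakInjective.isTotallyAcyclicCycle {X : ModuleCat.{u} R}
    (hX : GorensteinWeakInjective R X) : IsTotallyAcyclicCycle R X := by
  obtain ⟨I, d, π, hT, hπ, hπd⟩ := hX
  have hker : ker π = ker (d 0) := by
    rw [hπd.linearMap_ker_eq]
    exact (hT.2.1 (-1)).linearMap_ker_eq.symm
  obtain ⟨j, hj⟩ := exists_comp_eq_of_surjective hπ (d 0) hker.le
  refine ⟨I, d, 0 + 1, j, hT, ?_, hπ.comp_exact_iff_exact.1 (hj ▸ hT.2.1 0)⟩
  rw [← ker_eq_bot, eq_bot_iff]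
  intro x hx
  obtain ⟨b, rfl⟩ := hπ x
  have hb : b ∈ ker (d 0) := by simpa [← hj] using hx
  rw [← hker] at hb
  simpa using hb

theorem IsTotallyAcyclicCycle.exists_extend {X : ModuleCat.{u} R}
    (hX : IsTotallyAcyclicCycle R X) {A B Q : ModuleCat.{u} R} {ι : A →ₗ[R] B}
    {q : B →ₗ[R] Q} (h : ShortExactSeq R A B Q ι q) (hQ : HomExactOnTotallyAcyclic R Q)
    (φ : A →ₗ[R] X) : ∃ ψ : B →ₗ[R] X, ψ ∘ₗ ι = φ := by
  obtain ⟨I, d, n, j, hT, hj, hjd⟩ := hX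
  obtain ⟨ψ, hψ, hψι⟩ := hT.exists_extend h hQ (j ∘ₗ φ) <| by
    rw [← comp_assoc, hjd.linearMap_comp_eq_zero, zero_comp]
  obtain ⟨g, rfl⟩ := exists_comp_eq_of_injective hj ψ <| by
    rintro _ ⟨b, rfl⟩
    exact (hjd _).1 (LinearMap.congr_fun hψ b)
  exact ⟨g, (LinearMap.cancel_left hj).1 (by rw [← comp_assoc, hψι])⟩

theorem IsTotallyAcyclicCycle.extensionsSplit {X W : ModuleCat.{u} R}
    (hX : IsTotallyAcyclicCycle R X) (hW : HomExactOnTotallyAcyclic R W) :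
    ExtensionsSplit R W X :=
  fun _ _ _ h => hX.exists_extend h hW LinearMap.id

theorem IsTotallyAcyclicInjComplex.isTotallyAcyclicCycle_ker {I : ℤ → ModuleCat.{u} R}
    {d : ∀ n : ℤ, I n →ₗ[R] I (n + 1)} (hT : IsTotallyAcyclicInjComplex R (WeakInjective R) I d)
    (n : ℤ) : IsTotallyAcyclicCycle R (ModuleCat.of R (ker (d n))) :=
  ⟨I, d, n, (ker (d n)).subtype, hT, Subtype.val_injective, exact_subtype_ker_map _⟩

theorem IsTotallyAcyclicCycle.isSpliceableIn {X : ModuleCat.{u} R}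
    (hX : IsTotallyAcyclicCycle R X) : IsSpliceableIn R (IsTotallyAcyclicCycle R) X := by
  obtain ⟨I, d, n, j, hT, hj, hjd⟩ := hX
  refine ⟨fun W hW => IsTotallyAcyclicCycle.extensionsSplit ⟨I, d, n, j, hT, hj, hjd⟩
    (.of_weakInjective hW), ?_, ?_⟩
  · refine ⟨_, ⟨I n, j, (d n).codRestrict (ker (d (n + 1)))
      fun e => (hT.2.1 n).apply_apply_eq_zero e, hT.1 n, hj, fun y => ?_, fun e => ?_⟩,
      hT.isTotallyAcyclicCycle_ker (n + 1)⟩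
    · obtain ⟨e, he⟩ := ((hT.2.1 n) y).1 y.2
      exact ⟨e, Subtype.ext he⟩
    · exact Subtype.ext_iff.trans (hjd e)
  · obtain ⟨m, rfl⟩ : ∃ m, n = m + 1 := ⟨n - 1, by omega⟩
    obtain ⟨p, hp⟩ := exists_comp_eq_of_injective hj (d m) <| by
      rw [← hjd.linearMap_ker_eq, ← (hT.2.1 m).linearMap_ker_eq]
    refine ⟨_, ⟨I m, (ker (d m)).subtype, p, hT.1 m, Subtype.val_injective, fun x => ?_,
      fun e => ?_⟩, hT.isTotallyAcyclicCycle_ker m⟩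
    · obtain ⟨e, he⟩ := ((hT.2.1 m) (j x)).1 ((hjd (j x)).2 ⟨x, rfl⟩)
      exact ⟨e, hj (by rw [← he, ← hp]; rfl)⟩
    · rw [← map_eq_zero_iff j hj, ← LinearMap.comp_apply, hp]
      exact ⟨fun he => ⟨⟨e, he⟩, rfl⟩, by rintro ⟨k, rfl⟩; exact k.2⟩

end Cycles

inductive ExtensionClosure (𝒮 : ModuleCat.{u} R → Prop) : ModuleCat.{u} R → Prop
  | of {X : ModuleCat.{u} R} : 𝒮 X → ExtensionClosure 𝒮 X
  | ext {A X B : ModuleCat.{u} R} (i : A →ₗ[R] X) (p : X →ₗ[R] B) :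
      ShortExactSeq R A X B i p → ExtensionClosure 𝒮 A → ExtensionClosure 𝒮 B →
        ExtensionClosure 𝒮 X

section ExtensionClosure

variable {R}

open LinearMap

theorem ExtensionClosure.mono {𝒮 𝒮' : ModuleCat.{u} R → Prop} (h : ∀ X, 𝒮 X → 𝒮' X)
    {X : ModuleCat.{u} R} (hX : ExtensionClosure R 𝒮 X) : ExtensionClosure R 𝒮' X := by
  induction hX with
  | of hX => exact .of (h _ hX)
  | ext i p hses _ _ ihA ihB => exact .ext i p hses ihA ihB

theorem InjectiveShortExactSeq.horseshoe_right {A X B A' B' : ModuleCat.{u} R}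
    (DA : InjectiveShortExactSeq R A A') (DB : InjectiveShortExactSeq R B B') {i : A →ₗ[R] X}
    {p : X →ₗ[R] B} (h : ShortExactSeq R A X B i p) :
    ∃ (C : ModuleCat.{u} R) (_ : InjectiveShortExactSeq R X C) (α : A' →ₗ[R] C)
      (β : C →ₗ[R] B'), ShortExactSeq R A' C B' α β := by
  obtain ⟨hi, hp, hip⟩ := h
  obtain ⟨hjA, hqA, hA⟩ := DA.shortExactSeq
  obtain ⟨hjB, hqB, hB⟩ := DB.shortExactSeq
  obtain ⟨g, hg⟩ := DA.injective.exists_comp_eq i DA.i (by simp [ker_eq_bot.2 hi])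
  have hg' a : g (i a) = DA.i a := LinearMap.congr_fun hg a
  set J := g.prod (DB.i ∘ₗ p)
  have hJ {x : X} {e : DA.E} (hx : J x = (e, 0)) : ∃ a, i a = x ∧ DA.i a = e := by
    obtain ⟨a, rfl⟩ := (hip x).1 (hjB (by simpa [J] using congrArg Prod.snd hx))
    exact ⟨a, rfl, by simpa [J, hg'] using congrArg Prod.fst hx⟩
  have hJinj : Function.Injective J := by
    rw [← ker_eq_bot, eq_bot_iff]
    intro x hx
    obtain ⟨a, rfl, ha⟩ := hJ (x := x) (e := 0) hx
    simp [hjA (ha.trans (map_zero _).symm)]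
  set N := range J
  obtain ⟨α, hα⟩ := exists_comp_eq_of_surjective hqA (N.mkQ ∘ₗ inl R DA.E DB.E) <| by
    rw [hA.linearMap_ker_eq]
    rintro _ ⟨a, rfl⟩
    simpa using ⟨i a, by simp [J, hg', hip.apply_apply_eq_zero]⟩
  obtain ⟨β, hβ⟩ := exists_comp_eq_of_surjective N.mkQ_surjective (DB.p ∘ₗ snd R DA.E DB.E) <| by
    rw [Submodule.ker_mkQ]
    rintro _ ⟨x, rfl⟩
    simp [J, hB.apply_apply_eq_zero]
  have hα' e : α (DA.p e) = N.mkQ (e, 0) := LinearMap.congr_fun hα e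
  have hβ' y : β (N.mkQ y) = DB.p y.2 := LinearMap.congr_fun hβ y
  refine ⟨ModuleCat.of R ((DA.E × DB.E) ⧸ N), ⟨ModuleCat.of R (DA.E × DB.E), J, N.mkQ,
      Module.injective_prod DA.injective DB.injective, hJinj, N.mkQ_surjective,
      exact_map_mkQ_range J⟩, α, β, ?_, fun b => ?_,
      exact_of_comp_eq_zero_of_ker_le_range ?_ ?_⟩
  · rw [← ker_eq_bot, eq_bot_iff]
    intro c hc
    obtain ⟨e, rfl⟩ := hqA c
    obtain ⟨x, hx⟩ := (Submodule.Quotient.mk_eq_zero N).1 ((hα' e).symm.trans hc)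
    obtain ⟨a, -, rfl⟩ := hJ hx
    simp [hA.apply_apply_eq_zero]
  · obtain ⟨e, rfl⟩ := hqB b
    exact ⟨N.mkQ (0, e), hβ' _⟩
  · refine (LinearMap.cancel_right hqA).1 (LinearMap.ext fun e => ?_)
    exact (congrArg β (hα' e)).trans ((hβ' _).trans (map_zero _))
  · intro c hc
    obtain ⟨⟨e, e'⟩, rfl⟩ := N.mkQ_surjective c
    obtain ⟨b, hb⟩ := (hB e').1 ((hβ' _).symm.trans hc)
    obtain ⟨x, rfl⟩ := hp b
    refine ⟨DA.p (e - g x), (hα' _).trans ((Submodule.Quotient.eq N).2 ⟨-x, ?_⟩)⟩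
    simp [J, hb]

theorem InjectiveShortExactSeq.horseshoe_left {A X B A' B' : ModuleCat.{u} R}
    (DA : InjectiveShortExactSeq R A' A) (DB : InjectiveShortExactSeq R B' B) {i : A →ₗ[R] X}
    {p : X →ₗ[R] B} (h : ShortExactSeq R A X B i p) (hA : ExtensionsSplit R DB.E A) :
    ∃ (K : ModuleCat.{u} R) (_ : InjectiveShortExactSeq R K X) (α : A' →ₗ[R] K)
      (β : K →ₗ[R] B'), ShortExactSeq R A' K B' α β := by
  obtain ⟨u, hu⟩ := hA.exists_lift h DB.p
  have hu' e : p (u e) = DB.p e := LinearMap.congr_fun hu e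
  obtain ⟨hi, hp, hip⟩ := h
  obtain ⟨hiA, hpA, hA⟩ := DA.shortExactSeq
  obtain ⟨hiB, hpB, hB⟩ := DB.shortExactSeq
  set P := (i ∘ₗ DA.p).coprod u
  have hP : Function.Surjective P := by
    intro x
    obtain ⟨e', he'⟩ := hpB (p x)
    obtain ⟨a, ha⟩ := (hip (x - u e')).1 (by simp [hu', he'])
    obtain ⟨e, rfl⟩ := hpA a
    exact ⟨(e, e'), by simp [P, ha]⟩
  have hker (k : ker P) : i (DA.p (k : DA.E × DB.E).1) + u (k : DA.E × DB.E).2 = 0 := k.2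
  have hsnd (k : ker P) : DB.p (k : DA.E × DB.E).2 = 0 := by
    rw [← hu', eq_neg_of_add_eq_zero_right (hker k), map_neg, hip.apply_apply_eq_zero, neg_zero]
  obtain ⟨β, hβ⟩ := exists_comp_eq_of_injective hiB (snd R DA.E DB.E ∘ₗ (ker P).subtype) <| by
    rintro _ ⟨k, rfl⟩
    exact (hB _).1 (hsnd k)
  have hβ' k : DB.i (β k) = (k : DA.E × DB.E).2 := LinearMap.congr_fun hβ k
  let α : A' →ₗ[R] ModuleCat.of R (ker P) := (inl R DA.E DB.E ∘ₗ DA.i).codRestrict _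
    fun a => by simp [P, hA.apply_apply_eq_zero]
  refine ⟨_, ⟨ModuleCat.of R (DA.E × DB.E), (ker P).subtype, P,
      Module.injective_prod DA.injective DB.injective, Subtype.val_injective, hP,
      exact_subtype_ker_map P⟩, α, β, fun a a' ha => hiA congr(($ha).1.1), fun b => ?_,
      exact_of_comp_eq_zero_of_ker_le_range ?_ ?_⟩
  · obtain ⟨a, ha⟩ := (hip (u (DB.i b))).1 (by simp [hu', hB.apply_apply_eq_zero])
    obtain ⟨e, he⟩ := hpA (-a)
    exact ⟨⟨(e, DB.i b), by simp [P, he, ha]⟩, hiB (hβ' _)⟩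
  · ext a
    exact hiB ((hβ' (α a)).trans (map_zero DB.i).symm)
  · intro k hk
    have h2 : (k : DA.E × DB.E).2 = 0 := by simpa [hβ'] using congrArg DB.i hk
    have h1 : DA.p (k : DA.E × DB.E).1 = 0 := hi <| by simpa [h2] using hker k
    obtain ⟨a, ha⟩ := (hA _).1 h1
    exact ⟨a, Subtype.ext (Prod.ext ha h2.symm)⟩

theorem ExtensionClosure.isSpliceableIn {𝒮 : ModuleCat.{u} R → Prop}
    (h𝒮 : ∀ X, 𝒮 X → IsSpliceableIn R (ExtensionClosure R 𝒮) X) {X : ModuleCat.{u} R}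
    (hX : ExtensionClosure R 𝒮 X) : IsSpliceableIn R (ExtensionClosure R 𝒮) X := by
  induction hX with
  | of hX => exact h𝒮 _ hX
  | ext i p h _ _ ihA ihB =>
    obtain ⟨hsA, ⟨A', DA, hA'⟩, ⟨A'', EA, hA''⟩⟩ := ihA
    obtain ⟨hsB, ⟨B', DB, hB'⟩, ⟨B'', EB, hB''⟩⟩ := ihB
    refine ⟨fun W hW => .of_shortExactSeq h (hsA W hW) (hsB W hW), ?_, ?_⟩
    · obtain ⟨C, D, α, β, hαβ⟩ := DA.horseshoe_right DB h
      exact ⟨C, D, .ext α β hαβ hA' hB'⟩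
    · obtain ⟨K, D, α, β, hαβ⟩ :=
        EA.horseshoe_left EB h (hsA _ (weakInjective_of_injective _ EB.injective))
      exact ⟨K, D, .ext α β hαβ hA'' hB''⟩

theorem ExtensionClosure.isSpliceableIn_cycles {X : ModuleCat.{u} R}
    (hX : ExtensionClosure R (IsTotallyAcyclicCycle R) X) :
    IsSpliceableIn R (ExtensionClosure R (IsTotallyAcyclicCycle R)) X :=
  hX.isSpliceableIn fun _ hY => hY.isSpliceableIn.mono fun _ => .of

theorem InjectiveShortExactSeq.restrict {A X B C : ModuleCat.{u} R}
    (D : InjectiveShortExactSeq R X C) {i : A →ₗ[R] X} {p : X →ₗ[R] B}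
    (h : ShortExactSeq R A X B i p) :
    ∃ (C' : ModuleCat.{u} R) (_ : InjectiveShortExactSeq R A C') (α : B →ₗ[R] C')
      (β : C' →ₗ[R] C), ShortExactSeq R B C' C α β := by
  obtain ⟨α, β, hαβ, -⟩ := shortExactSeq_quotient h D.shortExactSeq
  exact ⟨_, ⟨D.E, D.i ∘ₗ i, Submodule.mkQ _, D.injective, D.shortExactSeq.1.comp h.1,
    Submodule.mkQ_surjective _, exact_map_mkQ_range _⟩, α, β, hαβ⟩

theorem InjectiveShortExactSeq.compose {K A X B : ModuleCat.{u} R}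
    (D : InjectiveShortExactSeq R K X) {i : A →ₗ[R] X} {p : X →ₗ[R] B}
    (h : ShortExactSeq R A X B i p) :
    ∃ (K' : ModuleCat.{u} R) (_ : InjectiveShortExactSeq R K' B) (α : K →ₗ[R] K')
      (β : K' →ₗ[R] A), ShortExactSeq R K K' A α β := by
  obtain ⟨hi, hp, hip⟩ := h
  obtain ⟨hDi, hDp, hD⟩ := D.shortExactSeq
  obtain ⟨β, hβ⟩ := exists_comp_eq_of_injective hi (D.p ∘ₗ (ker (p ∘ₗ D.p)).subtype) <| by
    rintro _ ⟨k, rfl⟩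
    exact (hip _).1 k.2
  have hβ' k : i (β k) = D.p k := LinearMap.congr_fun hβ k
  refine ⟨ModuleCat.of R (ker (p ∘ₗ D.p)), ⟨D.E, (ker (p ∘ₗ D.p)).subtype, p ∘ₗ D.p,
    D.injective, Subtype.val_injective, hp.comp hDp, exact_subtype_ker_map _⟩,
    D.i.codRestrict _ fun k => by simp [hD.apply_apply_eq_zero], β,
    fun k k' hk => hDi congr(($hk).1), fun a => ?_, fun k => ?_⟩
  · obtain ⟨e, he⟩ := hDp (i a)
    exact ⟨⟨e, by simp [he, hip.apply_apply_eq_zero]⟩, hi ((hβ' _).trans he)⟩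
  · rw [← map_eq_zero_iff i hi, hβ']
    exact (hD _).trans
      ⟨fun ⟨k', hk'⟩ => ⟨k', Subtype.ext hk'⟩, fun ⟨k', hk'⟩ => ⟨k', congr($hk'.1)⟩⟩

theorem isSpliceableIn_of_split {𝒮 : ModuleCat.{u} R → Prop} {A Q B : ModuleCat.{u} R}
    (hQ : IsSpliceableIn R (ExtensionClosure R 𝒮) Q) (hB : 𝒮 B) {i : A →ₗ[R] Q}
    {p : Q →ₗ[R] B} {s : B →ₗ[R] Q} {ρ : Q →ₗ[R] A} (h : ShortExactSeq R A Q B i p)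
    (h' : ShortExactSeq R B Q A s ρ) (hρ : ρ ∘ₗ i = LinearMap.id) :
    IsSpliceableIn R (ExtensionClosure R 𝒮) A := by
  obtain ⟨hsQ, ⟨C, D, hC⟩, ⟨K, D', hK⟩⟩ := hQ
  refine ⟨fun W hW => (hsQ W hW).of_retract hρ, ?_, ?_⟩
  · obtain ⟨C', DA, α, β, hαβ⟩ := D.restrict h
    exact ⟨C', DA, .ext α β hαβ (.of hB) hC⟩
  · obtain ⟨K', DA, α, β, hαβ⟩ := D'.compose h'
    exact ⟨K', DA, .ext α β hαβ hK (.of hB)⟩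

end ExtensionClosure

section CopureInjective

variable {R}

open LinearMap

theorem gorensteinWeakInjective_of_split {M Q P : ModuleCat.{u} R} {ι : M →ₗ[R] Q}
    {q : Q →ₗ[R] P} (h : ShortExactSeq R M Q P ι q) {r : Q →ₗ[R] M}
    (hr : r ∘ₗ ι = LinearMap.id) (hQ : ExtensionClosure R (IsTotallyAcyclicCycle R) Q) :
    GorensteinWeakInjective R M := by
  obtain ⟨s, hs, hqs⟩ := h.exists_complement hr
  let 𝒮 X := IsTotallyAcyclicCycle R X ∨ X = M ∨ X = P
  have hQ' : IsSpliceableIn R (ExtensionClosure R 𝒮) Q :=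
    hQ.isSpliceableIn_cycles.mono fun _ hX => hX.mono fun _ => Or.inl
  refine gorensteinWeakInjective_of_isSpliceableIn (fun X hX => hX.isSpliceableIn ?_)
    (.of (Or.inr (Or.inl rfl)) : ExtensionClosure R 𝒮 M)
  rintro X (hX | rfl | rfl)
  · exact hX.isSpliceableIn.mono fun _ hY => .of (Or.inl hY)
  · exact isSpliceableIn_of_split hQ' (Or.inr (Or.inr rfl)) h hs hr
  · exact isSpliceableIn_of_split hQ' (Or.inr (Or.inl rfl)) hs h hqs

theorem exists_shortExactSeq_of_cosyzygy {M G C : ModuleCat.{u} R} {ε : M →ₗ[R] G}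
    {g : G →ₗ[R] C} (h : ShortExactSeq R M G C ε g) (hG : IsTotallyAcyclicCycle R G)
    {Q' P' : ModuleCat.{u} R} {ι' : C →ₗ[R] Q'} {q' : Q' →ₗ[R] P'}
    (h' : ShortExactSeq R C Q' P' ι' q') (hP' : HomExactOnTotallyAcyclic R P')
    (hQ' : ExtensionClosure R (IsTotallyAcyclicCycle R) Q') :
    ∃ (Q P : ModuleCat.{u} R) (ι : M →ₗ[R] Q) (q : Q →ₗ[R] P), ShortExactSeq R M Q P ι q ∧
      HomExactOnTotallyAcyclic R P ∧ ExtensionClosure R (IsTotallyAcyclicCycle R) Q := by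
  obtain ⟨K, D, hK⟩ := hQ'.isSpliceableIn_cycles.2.2
  obtain ⟨P, D', α, c, hKPC⟩ := D.compose h'
  exact ⟨_, P, _, _, shortExactSeq_pullback_snd h c,
    .of_shortExactSeq D'.shortExactSeq D'.injective hP',
    .ext _ _ (shortExactSeq_pullback_fst hKPC g) hK (.of hG)⟩

theorem exists_shortExactSeq_of_gwidLE (k : ℕ) {M : ModuleCat.{u} R} (hM : GwidLE R M k) :
    ∃ (Q P : ModuleCat.{u} R) (ι : M →ₗ[R] Q) (q : Q →ₗ[R] P), ShortExactSeq R M Q P ι q ∧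
      HomExactOnTotallyAcyclic R P ∧ ExtensionClosure R (IsTotallyAcyclicCycle R) Q := by
  induction k generalizing M with
  | zero =>
    obtain ⟨G, d, ε, ⟨hε, hεd, -, hG0⟩, hG⟩ := hM
    have : Subsingleton (G 1) := ⟨fun a b => (hG0 1 one_pos a).trans (hG0 1 one_pos b).symm⟩
    exact ⟨G 0, G 1, ε, d 0, ⟨hε, fun _ => ⟨0, Subsingleton.elim _ _⟩, hεd⟩,
      .of_injective (Module.injective_of_subsingleton _), .of (hG 0).isTotallyAcyclicCycle⟩
  | succ k ih =>
    obtain ⟨G, d, ε, ⟨hε, hεd, hd, hG0⟩, hG⟩ := hM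
    have hC : GwidLE R (ModuleCat.of R (range (d 0))) k :=
      ⟨fun i => G (i + 1), fun i => d (i + 1), (range (d 0)).subtype,
        ⟨Subtype.val_injective, fun y => (hd 0 y).trans (by simp), fun i => hd (i + 1),
          fun i hi => hG0 (i + 1) (by omega)⟩, fun i => hG (i + 1)⟩
    obtain ⟨Q', P', ι', q', h', hP', hQ'⟩ := ih hC
    exact exists_shortExactSeq_of_cosyzygy
      ⟨hε, (d 0).surjective_rangeRestrict, fun y => Subtype.ext_iff.trans (hεd y)⟩
      (hG 0).isTotallyAcyclicCycle h' hP' hQ'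

theorem homContraExact_of_forall_exists_comp_eq {X A B C : ModuleCat.{u} R} {f : A →ₗ[R] B}
    {g : B →ₗ[R] C} (h : ShortExactSeq R A B C f g)
    (hext : ∀ φ : A →ₗ[R] X, ∃ ψ : B →ₗ[R] X, ψ ∘ₗ f = φ) : HomContraExact R X f g := by
  refine ⟨fun _ _ hh => (LinearMap.cancel_right h.2.1).1 hh, fun ψ => ⟨fun hψ => ?_, ?_⟩, hext⟩
  · refine exists_comp_eq_of_surjective h.2.1 ψ ?_
    rw [h.2.2.linearMap_ker_eq]
    rintro _ ⟨a, rfl⟩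
    exact LinearMap.congr_fun hψ a
  · rintro ⟨χ, rfl⟩
    exact (comp_assoc _ _ _).trans (by rw [h.2.2.linearMap_comp_eq_zero, comp_zero])

theorem gwiCopureExact_of_homExactOnTotallyAcyclic {A B C : ModuleCat.{u} R} {f : A →ₗ[R] B}
    {g : B →ₗ[R] C} (h : ShortExactSeq R A B C f g) (hC : HomExactOnTotallyAcyclic R C) :
    GWICopureExact R f g :=
  ⟨h, fun _ hX => homContraExact_of_forall_exists_comp_eq h
    (hX.isTotallyAcyclicCycle.exists_extend h hC)⟩

theorem gorensteinWeakInjective_of_subsingleton (X : ModuleCat.{u} R) [Subsingleton X] :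
    GorensteinWeakInjective R X :=
  ⟨fun _ => X, fun _ => 0, LinearMap.id,
    ⟨fun _ => Module.injective_of_subsingleton X, fun _ => Function.exact_of_subsingleton _ _,
      fun _ _ _ => Function.exact_of_subsingleton _ _⟩,
    Function.surjective_id, Function.exact_of_subsingleton _ _⟩

theorem GorensteinWeakInjective.gwidLE_zero {M : ModuleCat.{u} R}
    (hM : GorensteinWeakInjective R M) : GwidLE R M 0 := by
  let G : ℕ → ModuleCat.{u} R
    | 0 => M
    | _ + 1 => ModuleCat.of R PUnit
  have hG i : Subsingleton (G (i + 1)) := inferInstanceAs (Subsingleton PUnit)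
  refine ⟨G, fun _ => 0, LinearMap.id, ⟨Function.injective_id, fun y => ?_, fun i => ?_,
    fun i hi x => ?_⟩, fun i => ?_⟩
  · exact ⟨fun _ => ⟨y, rfl⟩, fun _ => rfl⟩
  · exact Function.exact_of_subsingleton _ _
  · obtain ⟨i, rfl⟩ := Nat.exists_eq_add_of_lt hi
    exact Subsingleton.elim _ _
  · cases i with
    | zero => exact hM
    | succ i => exact gorensteinWeakInjective_of_subsingleton _

end CopureInjective

/-- A module is Gorenstein weak injective iff it is `GWI`-copure injective and has finite
Gorenstein weak injective dimension. -/
theorem gorensteinWeakInjective_iff_copureInjective (M : ModuleCat.{u} R) :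
    GorensteinWeakInjective R M ↔
      GWICopureInjectiveMod R M ∧ ∃ k : ℕ, GwidLE R M k := by
  refine ⟨fun hM => ⟨fun _ _ _ _ _ h => h.2 M hM, 0, hM.gwidLE_zero⟩, ?_⟩
  rintro ⟨hM, k, hk⟩
  obtain ⟨Q, P, ι, q, h, hP, hQ⟩ := exists_shortExactSeq_of_gwidLE k hk
  obtain ⟨r, hr⟩ := (hM M Q P ι q (gwiCopureExact_of_homExactOnTotallyAcyclic h hP)).2.2 .id
  exact gorensteinWeakInjective_of_split h hr hQ
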